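/- Let X be a locally finite CAT(0) cube complex with no infinite collection of pairwise-crossing hyperplanes, and let γ be a combinatorial geodesic ray. Then there exists a combinatorial geodesic ray γ₀ with γ₀(0) = γ(0), W(γ₀) ⊆ W(γ), such that [γ₀] is minimal: any geodesic ray β with W(β) \ W(γ₀) finite satisfies W(γ₀) \ W(β) finite as well. -/

import Mathlib

/-- The set of walls separating `u` from `v` (hyperplanes via halfspace
indicator `side`). -/
def sepSet {V W : Type*} (side : W → V → Bool) (u v : V) : Set W :=
  {w | side w u ≠ side w v}

/-- `γ : ℕ → V` is a combinatorial geodesic ray in `Γ`. -/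
def IsGeodesicRay {V : Type*} (Γ : SimpleGraph V) (γ : ℕ → V) : Prop :=
  (∀ t : ℕ, Γ.Adj (γ t) (γ (t + 1))) ∧ ∀ s t : ℕ, s ≤ t → Γ.dist (γ s) (γ t) = t - s

/-- The set of hyperplanes crossed by the ray `γ`. -/
def raysWalls {V W : Type*} (side : W → V → Bool) (γ : ℕ → V) : Set W :=
  {w | ∃ t : ℕ, side w (γ t) ≠ side w (γ (t + 1))}

/-- Two hyperplanes cross: all four quarterspaces are nonempty. -/
def WallsCross {V W : Type*} (side : W → V → Bool) (w₁ w₂ : W) : Prop :=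
  ∀ b₁ b₂ : Bool, ∃ v : V, side w₁ v = b₁ ∧ side w₂ v = b₂

/-- `m` is a median of `x`, `y`, `z`. -/
def IsMedianPt {V : Type*} (Γ : SimpleGraph V) (x y z m : V) : Prop :=
  Γ.dist x m + Γ.dist m y = Γ.dist x y ∧
    Γ.dist x m + Γ.dist m z = Γ.dist x z ∧
    Γ.dist y m + Γ.dist m z = Γ.dist y z

/-- A median graph: any three vertices have a unique median. -/
def IsMedianGraph {V : Type*} (Γ : SimpleGraph V) : Prop :=
  ∀ x y z : V, ∃! m : V, IsMedianPt Γ x y z m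

/-!
Measure everything from `o = γ 0` and call the side of a wall not containing `o` its far
halfspace. With no infinite family of pairwise crossing walls, every infinite set of walls crossed
by `γ` contains a chain of walls with strictly nested far halfspaces. For such a chain `c`, the
gates of `o` in the far halfspaces of the `c n` lie on one geodesic ray `δ` from `o`, and the walls
of `δ` are exactly those whose far halfspace contains that of some `c n`.

If for every `l` all but finitely many walls of `δ` have their far halfspace inside that of `c l`,
then a ray `β` crossing almost only walls of `δ` enters every far halfspace of the chain, hence
crosses almost all walls of `δ`: the class of `δ` is minimal. Otherwise each chain yields a new
chain made of walls of `δ` escaping the far halfspace of some `c l`. Each wall of the old chain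
beyond `c l` is crossed by cofinitely many walls of the new chain, and this propagates to all later
chains, so a diagonal choice along the sequence of chains gives an infinite pairwise crossing
family.
-/

section

open Filter Function Set

variable {V W : Type*}

section Graphs

variable {Γ : SimpleGraph V}

theorem SimpleGraph.Connected.exists_adj_dist_add_one (hconn : Γ.Connected) {x y : V}
    (h : x ≠ y) : ∃ x', Γ.Adj x x' ∧ Γ.dist x' y + 1 = Γ.dist x y := by
  obtain ⟨p, hp⟩ := hconn.exists_walk_length_eq_dist x y
  cases p with
  | nil => exact absurd rfl h
  | @cons _ x' _ ha q =>
    refine ⟨x', ha, le_antisymm ?_ ?_⟩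
    · rw [← hp, SimpleGraph.Walk.length_cons]
      exact Nat.add_le_add_right (SimpleGraph.dist_le q) 1
    · have := hconn.dist_triangle (u := x) (v := x') (w := y)
      rw [SimpleGraph.dist_eq_one_iff_adj.mpr ha] at this
      omega

variable (Γ) in
def IsGeodesicallyConvex (K : Set V) : Prop :=
  ∀ x ∈ K, ∀ z ∈ K, ∀ y, Γ.dist x y + Γ.dist y z = Γ.dist x z → y ∈ K

theorem IsMedianGraph.exists_gate (hmed : IsMedianGraph Γ) (hconn : Γ.Connected) {K : Set V}
    (hK : K.Nonempty) (hconv : IsGeodesicallyConvex Γ K) (x : V) :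
    ∃ g ∈ K, ∀ v ∈ K, Γ.dist x g + Γ.dist g v = Γ.dist x v := by
  obtain ⟨_, ⟨g, hgK, rfl⟩, hmin⟩ := wellFounded_lt.has_min _ (hK.image (Γ.dist x))
  refine ⟨g, hgK, fun v hv => ?_⟩
  obtain ⟨m, ⟨hxg, hxv, hgv⟩, -⟩ := hmed x g v
  have hmg : Γ.dist m g = 0 := by
    have := hmin _ ⟨m, hconv g hgK v hv m hgv, rfl⟩
    omega
  rwa [hconn.dist_eq_zero_iff.mp hmg] at hxv

theorem IsGeodesicRay.dist_add_dist {γ : ℕ → V} (hγ : IsGeodesicRay Γ γ) {s t u : ℕ}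
    (hst : s ≤ t) (htu : t ≤ u) :
    Γ.dist (γ s) (γ t) + Γ.dist (γ t) (γ u) = Γ.dist (γ s) (γ u) := by
  rw [hγ.2 s t hst, hγ.2 t u htu, hγ.2 s u (hst.trans htu)]
  omega

theorem isGeodesicRay_of_dist_eq (hconn : Γ.Connected) {δ : ℕ → V}
    (hadj : ∀ t, Γ.Adj (δ t) (δ (t + 1))) (hdist : ∀ t, Γ.dist (δ 0) (δ t) = t) :
    IsGeodesicRay Γ δ := by
  refine ⟨hadj, fun s t hst => le_antisymm ?_ ?_⟩
  · obtain ⟨u, rfl⟩ := Nat.exists_eq_add_of_le hst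
    clear hst
    rw [Nat.add_sub_cancel_left]
    induction u with
    | zero => simp
    | succ u ih =>
      have := hconn.dist_triangle (u := δ s) (v := δ (s + u)) (w := δ (s + u + 1))
      rw [SimpleGraph.dist_eq_one_iff_adj.mpr (hadj _)] at this
      rw [← add_assoc]
      omega
  · have := hconn.dist_triangle (u := δ 0) (v := δ s) (w := δ t)
    rw [hdist, hdist] at this
    omega

theorem exists_geodesicRay_through (hconn : Γ.Connected) (o : V) (x : ℕ → V)
    (hx : ∀ m n, m ≤ n → Γ.dist o (x m) + Γ.dist (x m) (x n) = Γ.dist o (x n))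
    (hunbdd : ∀ t, ∃ n, t < Γ.dist o (x n)) :
    ∃ δ : ℕ → V, IsGeodesicRay Γ δ ∧ δ 0 = o ∧ ∀ n, δ (Γ.dist o (x n)) = x n := by
  -- The ray is built greedily: `δ t` is at distance `t` from `o`, on a geodesic from `o` to every
  -- `x n` that is at least that far away; the next step heads for the first such `x n`.
  let P : ℕ → V → Prop := fun t v =>
    Γ.dist o v = t ∧ ∀ n, t ≤ Γ.dist o (x n) → Γ.dist v (x n) + t = Γ.dist o (x n)
  have hstep : ∀ t v, P t v → ∃ v', Γ.Adj v v' ∧ P (t + 1) v' := by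
    rintro t v ⟨hov, hvx⟩
    let N := Nat.find (hunbdd t)
    have hN : t < Γ.dist o (x N) := Nat.find_spec (hunbdd t)
    have hvN := hvx N hN.le
    have hne : v ≠ x N := by
      rintro rfl
      rw [SimpleGraph.dist_self] at hvN
      omega
    obtain ⟨v', hadj, hv'⟩ := hconn.exists_adj_dist_add_one hne
    have hvv' := SimpleGraph.dist_eq_one_iff_adj.mpr hadj
    have := hconn.dist_triangle (u := o) (v := v) (w := v')
    have := hconn.dist_triangle (u := o) (v := v') (w := x N)
    refine ⟨v', hadj, by omega, fun n hn => ?_⟩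
    have := hx N n (Nat.find_min' (hunbdd t) (by omega : t < Γ.dist o (x n)))
    have := hconn.dist_triangle (u := v') (v := x N) (w := x n)
    have := hconn.dist_triangle (u := o) (v := v') (w := x n)
    omega
  have : Nonempty V := ⟨o⟩
  choose! next hadj hP using hstep
  let δ : ℕ → V := fun t => Nat.rec o (fun t v => next t v) t
  have hδ : ∀ t, P t (δ t) := by
    intro t
    induction t with
    | zero => exact ⟨SimpleGraph.dist_self, fun n _ => rfl⟩
    | succ t ih => exact hP t _ ih
  refine ⟨δ, isGeodesicRay_of_dist_eq hconn (fun t => hadj t _ (hδ t)) fun t => (hδ t).1, rfl,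
    fun n => hconn.dist_eq_zero_iff.mp ?_⟩
  have := (hδ _).2 n le_rfl
  omega

end Graphs

section Walls

variable (side : W → V → Bool)

def farHalfspace (o : V) (w : W) : Set V := {v | side w v ≠ side w o}

variable {side}

theorem mem_sepSet_iff_mem_farHalfspace {o v : V} {w : W} :
    w ∈ sepSet side o v ↔ v ∈ farHalfspace side o w := ne_comm

theorem sepSet_subset_union (x y z : V) :
    sepSet side x z ⊆ sepSet side x y ∪ sepSet side y z := by
  intro w (hw : side w x ≠ side w z)
  by_cases h : side w x = side w y
  · exact Or.inr fun h' => hw (h.trans h')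
  · exact Or.inl h

theorem mem_raysWalls_of_side_ne {γ : ℕ → V} {w : W} {s t : ℕ}
    (h : side w (γ s) ≠ side w (γ t)) : w ∈ raysWalls side γ := by
  by_contra hw
  have hconst : ∀ u, side w (γ u) = side w (γ 0) := by
    intro u
    induction u with
    | zero => rfl
    | succ u ih =>
      rw [← ih]
      by_contra h'
      exact hw ⟨u, Ne.symm h'⟩
  exact h ((hconst s).trans (hconst t).symm)

theorem exists_mem_farHalfspace_of_mem_raysWalls (o : V) {γ : ℕ → V} {w : W}
    (hw : w ∈ raysWalls side γ) : ∃ t, γ t ∈ farHalfspace side o w := by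
  obtain ⟨t, ht⟩ := hw
  by_cases h : side w (γ t) = side w o
  · exact ⟨t + 1, fun h' => ht (h.trans h'.symm)⟩
  · exact ⟨t, h⟩

theorem nonempty_farHalfspace_of_mem_raysWalls {γ : ℕ → V} {w : W}
    (hw : w ∈ raysWalls side γ) : (farHalfspace side (γ 0) w).Nonempty :=
  let ⟨_, ht⟩ := exists_mem_farHalfspace_of_mem_raysWalls (γ 0) hw
  ⟨_, ht⟩

theorem raysWalls_eq_iUnion_sepSet (γ : ℕ → V) :
    raysWalls side γ = ⋃ t, sepSet side (γ 0) (γ t) := by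
  ext w
  simp only [mem_iUnion, mem_sepSet_iff_mem_farHalfspace]
  exact ⟨exists_mem_farHalfspace_of_mem_raysWalls _,
    fun ⟨t, ht⟩ => mem_raysWalls_of_side_ne ht⟩

theorem WallsCross.symm {u w : W} (h : WallsCross side u w) : WallsCross side w u :=
  fun b₁ b₂ => (h b₂ b₁).imp fun _ hv => hv.symm

theorem not_wallsCross_self (w : W) : ¬ WallsCross side w w := fun h => by
  obtain ⟨v, h₁, h₂⟩ := h true false
  exact Bool.noConfusion (h₁.symm.trans h₂)

/-- The quadrant of `o` is never empty, so two walls cross as soon as the other three are not. -/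
theorem wallsCross_iff (o : V) {u w : W} :
    WallsCross side u w ↔ (farHalfspace side o u ∩ farHalfspace side o w).Nonempty ∧
      ¬ farHalfspace side o u ⊆ farHalfspace side o w ∧
      ¬ farHalfspace side o w ⊆ farHalfspace side o u := by
  simp only [farHalfspace, Set.Nonempty, not_subset, mem_inter_iff, mem_ofPred_eq,
    ← Bool.eq_not_iff]
  refine ⟨fun h => ⟨h _ _, h _ _, (h _ _).imp fun _ hv => hv.symm⟩, ?_⟩
  rintro ⟨hff, hfn, hnf⟩ b₁ b₂
  rcases Bool.eq_or_eq_not b₁ (side u o) with rfl | rfl <;>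
    rcases Bool.eq_or_eq_not b₂ (side w o) with rfl | rfl
  · exact ⟨o, rfl, rfl⟩
  · obtain ⟨v, hw, hu⟩ := hnf
    exact ⟨v, by simpa using hu, hw⟩
  · obtain ⟨v, hu, hw⟩ := hfn
    exact ⟨v, hu, by simpa using hw⟩
  · exact hff

theorem exists_infinite_wallsCross_of_forall_finset {α : Type*} (f : α → W) (P : α → Prop)
    (h : ∀ s : Finset α, (∀ x ∈ s, P x) →
      ∃ y, P y ∧ ∀ x ∈ s, WallsCross side (f x) (f y)) :
    ∃ S : Set W, S.Infinite ∧
      ∀ w₁ ∈ S, ∀ w₂ ∈ S, w₁ ≠ w₂ → WallsCross side w₁ w₂ := by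
  obtain ⟨g, -, hg⟩ :=
    exists_seq_of_forall_finset_exists P (fun x y => WallsCross side (f x) (f y)) h
  have hcross : ∀ m n, m ≠ n → WallsCross side (f (g m)) (f (g n)) := fun m n hmn =>
    hmn.lt_or_gt.elim (hg m n) fun h => (hg n m h).symm
  refine ⟨range (f ∘ g), infinite_range_of_injective fun m n hmn => ?_, ?_⟩
  · by_contra hne
    have := hcross m n hne
    rw [show f (g m) = f (g n) from hmn] at this
    exact not_wallsCross_self _ this
  · rintro _ ⟨m, rfl⟩ _ ⟨n, rfl⟩ hne
    exact hcross m n fun h => hne (h ▸ rfl)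

theorem exists_infinite_wallsCross_of_eventually {a : ℕ → ℕ → W} {l : ℕ → ℕ}
    (h : ∀ k n, l k ≤ n → ∀ j, k < j → ∀ᶠ i in atTop, WallsCross side (a j i) (a k n)) :
    ∃ S : Set W, S.Infinite ∧
      ∀ w₁ ∈ S, ∀ w₂ ∈ S, w₁ ≠ w₂ → WallsCross side w₁ w₂ := by
  refine exists_infinite_wallsCross_of_forall_finset (fun p : ℕ × ℕ => a p.1 p.2)
    (fun p => l p.1 ≤ p.2) fun s hs => ?_
  let K := s.sup Prod.fst + 1
  obtain ⟨n, hn, hns⟩ := ((eventually_ge_atTop (l K)).and ((s.eventually_all).2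
    fun p hp => h p.1 p.2 (hs p hp) K (Nat.lt_succ_of_le (s.le_sup hp)))).exists
  exact ⟨(K, n), hn, fun p hp => (hns p hp).symm⟩

theorem wallsCross_of_subset (o : V) {x u w : W}
    (hxu : farHalfspace side o x ⊆ farHalfspace side o u) (hxw : WallsCross side x w)
    (hwu : ¬ farHalfspace side o w ⊆ farHalfspace side o u) : WallsCross side u w := by
  rw [wallsCross_iff o] at hxw ⊢
  obtain ⟨hne, hxw, -⟩ := hxw
  exact ⟨hne.mono (inter_subset_inter_left _ hxu), fun h => hxw (hxu.trans h), hwu⟩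

end Walls

structure IsWallMetric (Γ : SimpleGraph V) (side : W → V → Bool) : Prop where
  finite_sepSet : ∀ u v, (sepSet side u v).Finite
  dist_eq_ncard : ∀ u v, Γ.dist u v = (sepSet side u v).ncard

namespace IsWallMetric

variable {Γ : SimpleGraph V} {side : W → V → Bool} (hW : IsWallMetric Γ side)
include hW

theorem disjoint_sepSet {x y z : V} (h : Γ.dist x y + Γ.dist y z = Γ.dist x z) :
    Disjoint (sepSet side x y) (sepSet side y z) := by
  have hxy := hW.finite_sepSet x y
  have hyz := hW.finite_sepSet y z
  have hunion := Set.ncard_union_add_ncard_inter _ _ hxy hyz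
  have hle := Set.ncard_le_ncard (sepSet_subset_union x y z) (hxy.union hyz)
  simp only [← hW.dist_eq_ncard] at hunion hle
  rw [Set.disjoint_iff_inter_eq_empty, ← Set.ncard_eq_zero (hxy.inter_of_left _)]
  omega

theorem sepSet_subset_of_dist_add_eq {x y z : V} (h : Γ.dist x y + Γ.dist y z = Γ.dist x z) :
    sepSet side x y ⊆ sepSet side x z := by
  intro w (hxy : side w x ≠ side w y)
  by_contra hxz
  have hyz : side w y ≠ side w z := fun h' => hxz fun h'' => hxy (h''.trans h'.symm)
  exact Set.disjoint_left.mp (hW.disjoint_sepSet h) hxy hyz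

theorem isGeodesicallyConvex_farHalfspace (o : V) (w : W) :
    IsGeodesicallyConvex Γ (farHalfspace side o w) := by
  intro x (hx : side w x ≠ side w o) z (hz : side w z ≠ side w o) y hxyz
  by_contra hy
  have hy : side w y = side w o := not_not.mp hy
  exact Set.disjoint_left.mp (hW.disjoint_sepSet hxyz) (hy ▸ hx : side w x ≠ side w y)
    (hy ▸ hz.symm : side w y ≠ side w z)

theorem finite_setOf_farHalfspace_subset {o : V} {u : W}
    (hu : (farHalfspace side o u).Nonempty) :
    {w | farHalfspace side o u ⊆ farHalfspace side o w}.Finite := by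
  obtain ⟨p, hp⟩ := hu
  exact (hW.finite_sepSet o p).subset fun w hw => mem_sepSet_iff_mem_farHalfspace.mpr (hw hp)

theorem eventually_not_farHalfspace_subset {o : V} {w : W}
    (hw : (farHalfspace side o w).Nonempty) {u : ℕ → W} (hu : Injective u) :
    ∀ᶠ i in atTop, ¬ farHalfspace side o w ⊆ farHalfspace side o (u i) := by
  rw [← Nat.cofinite_eq_atTop]
  exact hu.tendsto_cofinite.eventually
    (hW.finite_setOf_farHalfspace_subset hw).eventually_cofinite_notMem

variable {γ : ℕ → V} (hγ : IsGeodesicRay Γ γ)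
include hγ

theorem sepSet_subset_of_le {s t : ℕ} (h : s ≤ t) :
    sepSet side (γ 0) (γ s) ⊆ sepSet side (γ 0) (γ t) :=
  hW.sepSet_subset_of_dist_add_eq (hγ.dist_add_dist (Nat.zero_le s) h)

theorem eventually_mem_farHalfspace {w : W} (hw : w ∈ raysWalls side γ) :
    ∀ᶠ t in atTop, γ t ∈ farHalfspace side (γ 0) w := by
  obtain ⟨s, hs⟩ := exists_mem_farHalfspace_of_mem_raysWalls (γ 0) hw
  filter_upwards [eventually_ge_atTop s] with t ht
  rw [← mem_sepSet_iff_mem_farHalfspace] at hs ⊢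
  exact hW.sepSet_subset_of_le hγ ht hs

theorem raysWalls_infinite : (raysWalls side γ).Infinite := by
  intro hfin
  have hsub : sepSet side (γ 0) (γ ((raysWalls side γ).ncard + 1)) ⊆ raysWalls side γ :=
    fun w hw => mem_raysWalls_of_side_ne hw
  have := Set.ncard_le_ncard hsub hfin
  rw [← hW.dist_eq_ncard, hγ.2 _ _ (Nat.zero_le _)] at this
  omega

end IsWallMetric

section Chains

variable (side : W → V → Bool)

def IsNestedChain (γ : ℕ → V) (c : ℕ → W) : Prop :=
  (∀ n, c n ∈ raysWalls side γ) ∧ StrictAnti fun n => farHalfspace side (γ 0) (c n)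

def chainWalls (o : V) (c : ℕ → W) : Set W :=
  {w | ∃ n, farHalfspace side o (c n) ⊆ farHalfspace side o w}

def escapingWalls (o : V) (c : ℕ → W) (l : ℕ) : Set W :=
  {w ∈ chainWalls side o c | ¬ farHalfspace side o w ⊆ farHalfspace side o (c l)}

variable {side} {γ : ℕ → V} {c : ℕ → W}

theorem IsNestedChain.injective (hc : IsNestedChain side γ c) : Injective c :=
  Injective.of_comp (f := farHalfspace side (γ 0)) hc.2.injective

theorem IsNestedChain.nonempty (hc : IsNestedChain side γ c) (n : ℕ) :
    (farHalfspace side (γ 0) (c n)).Nonempty :=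
  nonempty_farHalfspace_of_mem_raysWalls (hc.1 n)

theorem IsNestedChain.chainWalls_subset (hc : IsNestedChain side γ c) :
    chainWalls side (γ 0) c ⊆ raysWalls side γ := by
  rintro w ⟨n, hn⟩
  obtain ⟨t, ht⟩ := exists_mem_farHalfspace_of_mem_raysWalls (γ 0) (hc.1 n)
  exact mem_raysWalls_of_side_ne (hn ht)

theorem IsNestedChain.wallsCross_of_mem_escapingWalls (hc : IsNestedChain side γ c) {l j : ℕ}
    {v : W} (hv : v ∈ escapingWalls side (γ 0) c l) (hlj : l ≤ j)
    (hj : ¬ farHalfspace side (γ 0) (c j) ⊆ farHalfspace side (γ 0) v) :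
    WallsCross side v (c j) := by
  obtain ⟨⟨m, hm⟩, hvl⟩ := hv
  rw [wallsCross_iff (γ 0)]
  refine ⟨(hc.nonempty (max m j)).mono (subset_inter ((hc.2.antitone (le_max_left m j)).trans hm)
    (hc.2.antitone (le_max_right m j))), fun h => hvl (h.trans (hc.2.antitone hlj)), hj⟩

variable {Γ : SimpleGraph V} (hW : IsWallMetric Γ side) (hγ : IsGeodesicRay Γ γ)
include hW hγ

theorem exists_infinite_wallsCross_of_finite_below {T : Set W} (hTγ : T ⊆ raysWalls side γ)
    (hT : T.Infinite)
    (hbelow : ∀ u ∈ T,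
      {w ∈ T | farHalfspace side (γ 0) w ⊆ farHalfspace side (γ 0) u}.Finite) :
    ∃ S : Set W, S.Infinite ∧
      ∀ w₁ ∈ S, ∀ w₂ ∈ S, w₁ ≠ w₂ → WallsCross side w₁ w₂ := by
  refine exists_infinite_wallsCross_of_forall_finset id (· ∈ T) fun s hs => ?_
  have hbad : (⋃ u ∈ s,
      {w ∈ T | farHalfspace side (γ 0) w ⊆ farHalfspace side (γ 0) u} ∪
      {w | farHalfspace side (γ 0) u ⊆ farHalfspace side (γ 0) w}).Finite :=
    s.finite_toSet.biUnion fun u hu => (hbelow u (hs u hu)).union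
      (hW.finite_setOf_farHalfspace_subset
        (nonempty_farHalfspace_of_mem_raysWalls (hTγ (hs u hu))))
  obtain ⟨w, hwT, hwbad⟩ := (hT.sdiff hbad).nonempty
  simp only [mem_iUnion, mem_union, not_exists, not_or] at hwbad
  refine ⟨w, hwT, fun u hu => ?_⟩
  obtain ⟨hwu, huw⟩ := hwbad u hu
  obtain ⟨t, ht⟩ := ((hW.eventually_mem_farHalfspace hγ (hTγ (hs u hu))).and
    (hW.eventually_mem_farHalfspace hγ (hTγ hwT))).exists
  exact (wallsCross_iff (γ 0)).mpr ⟨⟨γ t, ht⟩, huw, fun h => hwu ⟨hwT, h⟩⟩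

theorem exists_nestedChain_of_infinite
    (hnocross : ¬ ∃ S : Set W, S.Infinite ∧
      ∀ w₁ ∈ S, ∀ w₂ ∈ S, w₁ ≠ w₂ → WallsCross side w₁ w₂)
    {S : Set W} (hSγ : S ⊆ raysWalls side γ) (hS : S.Infinite) :
    ∃ c, IsNestedChain side γ c ∧ ∀ n, c n ∈ S := by
  set o := γ 0
  let T := {a ∈ S | {b ∈ S | farHalfspace side o b ⊆ farHalfspace side o a}.Finite}
  by_cases hT : T.Infinite
  · exact absurd (exists_infinite_wallsCross_of_finite_below hW hγ (fun a ha => hSγ ha.1) hT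
      fun u hu => hu.2.subset fun w hw => ⟨hw.1.1, hw.2⟩) hnocross
  rw [not_infinite] at hT
  have hstep :
      ∀ a ∈ S \ T, ∃ b ∈ S \ T, farHalfspace side o b ⊂ farHalfspace side o a := by
    rintro a ⟨haS, haT⟩
    have hinf : (({b ∈ S | farHalfspace side o b ⊆ farHalfspace side o a} \ T) \
        {b | farHalfspace side o a ⊆ farHalfspace side o b}).Infinite :=
      (Set.Infinite.sdiff (fun h => haT ⟨haS, h⟩) hT).sdiff
        (hW.finite_setOf_farHalfspace_subset (nonempty_farHalfspace_of_mem_raysWalls (hSγ haS)))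
    obtain ⟨b, ⟨⟨hbS, hba⟩, hbT⟩, hab⟩ := hinf.nonempty
    exact ⟨b, ⟨hbS, hbT⟩, ssubset_of_subset_not_subset hba hab⟩
  obtain ⟨a, ha⟩ := (hS.sdiff hT).nonempty
  have : Nonempty W := ⟨a⟩
  choose! next hnextS hnext using hstep
  have hmem : ∀ n, next^[n] a ∈ S \ T := by
    intro n
    induction n with
    | zero => exact ha
    | succ n ih => rw [iterate_succ_apply']; exact hnextS _ ih
  refine ⟨fun n => next^[n] a,
    ⟨fun n => hSγ (hmem n).1, strictAnti_nat_of_succ_lt fun n => ?_⟩, fun n => (hmem n).1⟩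
  simp only [iterate_succ_apply']
  exact hnext _ (hmem n)

end Chains

section Minimal

variable {side : W → V → Bool} {Γ : SimpleGraph V} (hW : IsWallMetric Γ side)
include hW

theorem chainWalls_diff_raysWalls_finite {o : V} {c : ℕ → W}
    (htight : ∀ l, (escapingWalls side o c l).Finite) {β : ℕ → V} (hβ : IsGeodesicRay Γ β)
    (hβc : (raysWalls side β \ chainWalls side o c).Finite) :
    (chainWalls side o c \ raysWalls side β).Finite := by
  have henter : ∀ l, ∃ t, β t ∈ farHalfspace side o (c l) := by
    intro l
    obtain ⟨v, ⟨hvβ, hvc⟩, hvl⟩ :=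
      (((hW.raysWalls_infinite hβ).sdiff hβc).sdiff (htight l)).nonempty
    have hvc : v ∈ chainWalls side o c := not_not.mp fun h => hvc ⟨hvβ, h⟩
    obtain ⟨t, ht⟩ := exists_mem_farHalfspace_of_mem_raysWalls o hvβ
    exact ⟨t, not_not.mp (fun h => hvl ⟨hvc, h⟩) ht⟩
  refine (hW.finite_sepSet o (β 0)).subset ?_
  rintro w ⟨⟨n, hn⟩, hwβ⟩
  obtain ⟨t, ht⟩ := henter n
  have hconst : side w (β t) = side w (β 0) :=
    not_not.mp fun h => hwβ (mem_raysWalls_of_side_ne h)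
  refine mem_sepSet_iff_mem_farHalfspace.mpr ?_
  show side w (β 0) ≠ side w o
  rw [← hconst]
  exact hn ht

variable {γ : ℕ → V} {c : ℕ → W}

theorem eventually_wallsCross_of_forall_mem_escapingWalls (hc : IsNestedChain side γ c)
    {c' : ℕ → W} (hc' : Injective c') {l : ℕ}
    (hlink : ∀ i, c' i ∈ escapingWalls side (γ 0) c l) {n : ℕ} (hn : l ≤ n) :
    ∀ᶠ i in atTop, WallsCross side (c' i) (c n) := by
  filter_upwards [hW.eventually_not_farHalfspace_subset (hc.nonempty n) hc'] with i hi
  exact hc.wallsCross_of_mem_escapingWalls (hlink i) hn hi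

theorem eventually_wallsCross_of_forall_mem_chainWalls (hc : IsNestedChain side γ c)
    {c' : ℕ → W} (hc' : Injective c') (hlink : ∀ i, c' i ∈ chainWalls side (γ 0) c) {w : W}
    (hw : (farHalfspace side (γ 0) w).Nonempty)
    (hcw : ∀ᶠ m in atTop, WallsCross side (c m) w) :
    ∀ᶠ i in atTop, WallsCross side (c' i) w := by
  obtain ⟨N, hN⟩ := hcw.exists_forall_of_atTop
  filter_upwards [hW.eventually_not_farHalfspace_subset (hc.nonempty N) hc',
    hW.eventually_not_farHalfspace_subset hw hc'] with i hNi hwi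
  obtain ⟨m, hm⟩ := hlink i
  have hNm : N ≤ m := le_of_not_gt fun h => hNi ((hc.2.antitone h.le).trans hm)
  exact wallsCross_of_subset (γ 0) hm (hN m hNm) hwi

theorem exists_nestedChain_forall_escapingWalls_finite (hγ : IsGeodesicRay Γ γ)
    (hnocross : ¬ ∃ S : Set W, S.Infinite ∧
      ∀ w₁ ∈ S, ∀ w₂ ∈ S, w₁ ≠ w₂ → WallsCross side w₁ w₂) :
    ∃ c, IsNestedChain side γ c ∧ ∀ l, (escapingWalls side (γ 0) c l).Finite := by
  by_contra! hnot
  have hstep : ∀ c : {c // IsNestedChain side γ c},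
      ∃ l, ∃ c' : {c // IsNestedChain side γ c},
        ∀ i, c'.1 i ∈ escapingWalls side (γ 0) c.1 l := by
    rintro ⟨c, hc⟩
    obtain ⟨l, hl⟩ := hnot c hc
    obtain ⟨c', hc', hmem⟩ := exists_nestedChain_of_infinite hW hγ hnocross
      (fun w hw => hc.chainWalls_subset hw.1) hl
    exact ⟨l, ⟨c', hc'⟩, hmem⟩
  choose lk next hnext using hstep
  obtain ⟨c₀, hc₀, -⟩ := exists_nestedChain_of_infinite hW hγ hnocross subset_rfl
    (hW.raysWalls_infinite hγ)
  let st : ℕ → {c // IsNestedChain side γ c} := fun k => next^[k] ⟨c₀, hc₀⟩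
  have hst : ∀ k i, (st (k + 1)).1 i ∈ escapingWalls side (γ 0) (st k).1 (lk (st k)) := by
    intro k i
    simp only [st, iterate_succ_apply']
    exact hnext _ i
  refine hnocross (exists_infinite_wallsCross_of_eventually
    (a := fun k => (st k).1) (l := fun k => lk (st k)) fun k n hn j hj => ?_)
  induction j, hj using Nat.le_induction with
  | base =>
    exact eventually_wallsCross_of_forall_mem_escapingWalls hW (st k).2
      (st (k + 1)).2.injective (hst k) hn
  | succ j _ ih =>
    exact eventually_wallsCross_of_forall_mem_chainWalls hW (st j).2
      (st (j + 1)).2.injective (fun i => (hst j i).1) ((st k).2.nonempty n) ih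

theorem exists_geodesicRay_raysWalls_eq_chainWalls (hconn : Γ.Connected)
    (hmed : IsMedianGraph Γ) (hc : IsNestedChain side γ c) :
    ∃ δ, IsGeodesicRay Γ δ ∧ δ 0 = γ 0 ∧
      raysWalls side δ = chainWalls side (γ 0) c := by
  choose g hgc hgate using fun n => hmed.exists_gate hconn (hc.nonempty n)
    (hW.isGeodesicallyConvex_farHalfspace (γ 0) (c n)) (γ 0)
  have hsep : ∀ n w, w ∈ sepSet side (γ 0) (g n) ↔
      farHalfspace side (γ 0) (c n) ⊆ farHalfspace side (γ 0) w := fun n w =>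
    ⟨fun hw v hv => mem_sepSet_iff_mem_farHalfspace.mp
      (hW.sepSet_subset_of_dist_add_eq (hgate n v hv) hw),
      fun hw => mem_sepSet_iff_mem_farHalfspace.mpr (hw (hgc n))⟩
  have hunbdd : ∀ t, t < Γ.dist (γ 0) (g t) := by
    intro t
    have hsub : c '' Iic t ⊆ sepSet side (γ 0) (g t) := by
      rintro _ ⟨j, hj, rfl⟩
      exact (hsep t _).mpr (hc.2.antitone hj)
    have := Set.ncard_le_ncard hsub (hW.finite_sepSet _ _)
    rw [ncard_image_of_injective _ hc.injective, ncard_Iic_nat, ← hW.dist_eq_ncard] at this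
    omega
  obtain ⟨δ, hδ, hδ0, hδg⟩ := exists_geodesicRay_through hconn (γ 0) g
    (fun m n h => hgate m _ (hc.2.antitone h (hgc n))) fun t => ⟨t, hunbdd t⟩
  refine ⟨δ, hδ, hδ0, Set.ext fun w => ?_⟩
  rw [raysWalls_eq_iUnion_sepSet, hδ0, mem_iUnion]
  constructor
  · rintro ⟨t, ht⟩
    have := hW.sepSet_subset_of_le hδ (hunbdd t).le (hδ0 ▸ ht)
    rw [hδ0, hδg] at this
    exact ⟨t, (hsep t w).mp this⟩
  · rintro ⟨n, hn⟩
    exact ⟨_, by rw [hδg]; exact (hsep n w).mpr hn⟩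

end Minimal

end

theorem minimal_ray_below_exists_general {V W : Type*} (Γ : SimpleGraph V)
    (hconn : Γ.Connected)
    (hmedian : IsMedianGraph Γ)
    (side : W → V → Bool)
    (hfin : ∀ u v : V, (sepSet side u v).Finite)
    (hdist : ∀ u v : V, Γ.dist u v = (sepSet side u v).ncard)
    (hnocross : ¬ ∃ S : Set W, S.Infinite ∧
      ∀ w₁ ∈ S, ∀ w₂ ∈ S, w₁ ≠ w₂ → WallsCross side w₁ w₂)
    (γ : ℕ → V) (hγ : IsGeodesicRay Γ γ) :
    ∃ γ₀ : ℕ → V, IsGeodesicRay Γ γ₀ ∧ γ₀ 0 = γ 0 ∧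
      raysWalls side γ₀ ⊆ raysWalls side γ ∧
      ∀ β : ℕ → V, IsGeodesicRay Γ β →
        (raysWalls side β \ raysWalls side γ₀).Finite →
        (raysWalls side γ₀ \ raysWalls side β).Finite := by
  have hW : IsWallMetric Γ side := ⟨hfin, hdist⟩
  obtain ⟨c, hc, htight⟩ := exists_nestedChain_forall_escapingWalls_finite hW hγ hnocross
  obtain ⟨δ, hδ, hδ0, hδc⟩ := exists_geodesicRay_raysWalls_eq_chainWalls hW hconn hmedian hc
  refine ⟨δ, hδ, hδ0, hδc ▸ hc.chainWalls_subset, fun β hβ hβδ => ?_⟩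
  rw [hδc] at hβδ ⊢
  exact chainWalls_diff_raysWalls_finite hW htight hβ hβδ

/-- let `X` be a locally finite CAT(0) cube complex (modeled by
its median 1-skeleton with hyperplane structure) with no infinite family of
pairwise-crossing hyperplanes, and let `γ` be a combinatorial geodesic ray.
Then there is a combinatorial geodesic ray `γ₀` with `γ₀(0) = γ(0)` and
`W(γ₀) ⊆ W(γ)` whose class is minimal: any geodesic ray `β` with
`W(β) \ W(γ₀)` finite also has `W(γ₀) \ W(β)` finite. -/
theorem minimal_ray_below_exists {V W : Type*} (Γ : SimpleGraph V)
    (hconn : Γ.Connected) (hlf : ∀ v : V, (Γ.neighborSet v).Finite)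
    (hmedian : IsMedianGraph Γ)
    (side : W → V → Bool)
    (hfin : ∀ u v : V, (sepSet side u v).Finite)
    (hdist : ∀ u v : V, Γ.dist u v = (sepSet side u v).ncard)
    (hnocross : ¬ ∃ S : Set W, S.Infinite ∧
      ∀ w₁ ∈ S, ∀ w₂ ∈ S, w₁ ≠ w₂ → WallsCross side w₁ w₂)
    (γ : ℕ → V) (hγ : IsGeodesicRay Γ γ) :
    ∃ γ₀ : ℕ → V, IsGeodesicRay Γ γ₀ ∧ γ₀ 0 = γ 0 ∧
      raysWalls side γ₀ ⊆ raysWalls side γ ∧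
      ∀ β : ℕ → V, IsGeodesicRay Γ β →
        (raysWalls side β \ raysWalls side γ₀).Finite →
        (raysWalls side γ₀ \ raysWalls side β).Finite :=
  minimal_ray_below_exists_general Γ hconn hmedian side hfin hdist hnocross γ hγ
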